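/- Let w(x) = x^α (1-x)^β with α, β > 0. There exists C > 0 such that for every n ≥ 1 and every x ∈ (0,1), w(x) · ( Σ_{k=0}^n w^{-2}(k*/n) p_{n,k}(x) )^{1/2} ≤ C, where k* = max(1, min(k, n−1)) replaces the endpoint indices k = 0 and k = n. -/

import Mathlib

/-! With `r = k*/n`, the ratio `w(x)/w(r)` is `(x/r)^α ((1-x)/(1-r))^β`, and one of the two factors
is at most `1`, so its square is at most `(x/r)^(2α) + ((1-x)/(1-r))^(2β)`. Since `k + 1 ≤ 3k*`,
`x/r ≤ 3nx/(k+1)`; after bounding the real power by an integer power `m`, the identity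
`p_{n,k}(x) ∏_{i<m} (n+1+i)x/(k+1+i) = p_{n+m,k+m}(x)` bounds the Bernstein average of `(x/r)^(2α)`
uniformly in `n` and `x`. The other factor follows by the symmetry `k ↦ n - k`, `x ↦ 1 - x`. -/

open Finset Real

theorem rpow_le_one_add_pow {t γ : ℝ} {m : ℕ} (ht : 0 ≤ t) (hγ : 0 ≤ γ) (hγm : γ ≤ m) :
    t ^ γ ≤ 1 + t ^ m := by
  rcases le_total t 1 with h | h
  · linarith [rpow_le_one ht h hγ, pow_nonneg ht m]
  · linarith [rpow_natCast t m ▸ rpow_le_rpow_of_exponent_le h hγm]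

theorem div_succ_le_mul_div {n k m i : ℕ} {x : ℝ} (hx : 0 ≤ x) (hi : i < m) :
    n * x / (k + 1) ≤ (m + 1) * ((n + 1 + i) * x / (k + 1 + i)) := by
  have hik : (k + 1 + i : ℝ) ≤ (m + 1) * (k + 1) := by
    have : (i : ℝ) + 1 ≤ m := by exact_mod_cast hi
    nlinarith
  rw [mul_div_assoc', div_le_div_iff₀ (by positivity) (by positivity)]
  have : (n : ℝ) * x ≤ (n + 1 + i) * x := by nlinarith
  calc (n : ℝ) * x * (k + 1 + i) ≤ (n + 1 + i) * x * ((m + 1) * (k + 1)) := by gcongr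
    _ = _ := by ring

/-- The alternative `a = 0` relies on `x / 0 = 0`; it is what makes the bound hold at `n = 1`,
where `1 - clampedNode 1 k = 0`. -/
theorem div_div_le_mul_div {a k c n : ℕ} {x : ℝ} (hx : 0 ≤ x) (h : a = 0 ∨ k + 1 ≤ c * a) :
    x / (a / n) ≤ c * (n * x / (k + 1)) := by
  rcases h with rfl | h
  · simp only [CharP.cast_eq_zero, zero_div, div_zero]
    positivity
  have ha : (0 : ℝ) < a := by exact_mod_cast Nat.pos_of_ne_zero (by rintro rfl; omega)
  have h' : (k + 1 : ℝ) ≤ c * a := by exact_mod_cast h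
  rw [div_div_eq_mul_div, mul_div_assoc', div_le_div_iff₀ ha (by positivity), mul_comm x]
  calc (n * x * (k + 1) : ℝ) ≤ n * x * (c * a) := by gcongr
    _ = _ := by ring

theorem sq_mul_le_sq_add_sq {a b : ℝ} (ha : 0 ≤ a) (hb : 0 ≤ b) (h : a ≤ 1 ∨ b ≤ 1) :
    (a * b) ^ 2 ≤ a ^ 2 + b ^ 2 := by
  rw [mul_pow]
  rcases h with h | h
  · nlinarith [pow_le_one₀ (n := 2) ha h, sq_nonneg a, sq_nonneg b]
  · nlinarith [pow_le_one₀ (n := 2) hb h, sq_nonneg a, sq_nonneg b]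

theorem weight_sq_mul_inv_sq_le {x r α β : ℝ} (hx0 : 0 ≤ x) (hx1 : x ≤ 1) (hr0 : 0 ≤ r)
    (hr1 : r ≤ 1) (hα : 0 ≤ α) (hβ : 0 ≤ β) :
    (x ^ α * (1 - x) ^ β) ^ 2 * ((r ^ α * (1 - r) ^ β)⁻¹) ^ 2 ≤
      (x / r) ^ (2 * α) + ((1 - x) / (1 - r)) ^ (2 * β) := by
  have hfactor : x ^ α * (1 - x) ^ β * (r ^ α * (1 - r) ^ β)⁻¹ =
      (x / r) ^ α * ((1 - x) / (1 - r)) ^ β := by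
    rw [div_rpow hx0 hr0, div_rpow (by linarith) (by linarith), mul_inv]
    ring
  have hq0 : 0 ≤ x / r := by positivity
  have hq1 : 0 ≤ (1 - x) / (1 - r) := div_nonneg (by linarith) (by linarith)
  have hle_one : (x / r) ^ α ≤ 1 ∨ ((1 - x) / (1 - r)) ^ β ≤ 1 := by
    rcases le_total x r with h | h
    · exact .inl (rpow_le_one hq0 (div_le_one_of_le₀ h hr0) hα)
    · exact .inr (rpow_le_one hq1 (div_le_one_of_le₀ (by linarith) (by linarith)) hβ)
  rw [← mul_pow, hfactor, mul_comm 2 α, mul_comm 2 β, rpow_mul hq0, rpow_mul hq1, rpow_two,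
    rpow_two]
  exact sq_mul_le_sq_add_sq (by positivity) (by positivity) hle_one

namespace bernsteinPolynomial

section CommRing

variable {R : Type*} [CommRing R]

theorem eval_eq (n k : ℕ) (x : R) :
    (bernsteinPolynomial R n k).eval x = n.choose k * x ^ k * (1 - x) ^ (n - k) := by
  simp [bernsteinPolynomial]

theorem sum_eval (n : ℕ) (x : R) :
    ∑ k ∈ range (n + 1), (bernsteinPolynomial R n k).eval x = 1 := by
  rw [← Polynomial.eval_finsetSum, sum, Polynomial.eval_one]

theorem eval_one_sub {n k : ℕ} (hk : k ≤ n) (x : R) :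
    (bernsteinPolynomial R n k).eval (1 - x) = (bernsteinPolynomial R n (n - k)).eval x := by
  rw [← flip R n k hk, Polynomial.eval_comp]
  simp

theorem sum_eval_mul_reflect (n : ℕ) (x : R) (g : ℕ → R) :
    ∑ k ∈ range (n + 1), (bernsteinPolynomial R n k).eval x * g k =
      ∑ k ∈ range (n + 1), (bernsteinPolynomial R n k).eval (1 - x) * g (n - k) := by
  rw [← sum_range_reflect]
  refine sum_congr rfl fun k hk => ?_
  rw [mem_range] at hk
  rw [eval_one_sub (by omega), Nat.add_sub_cancel]

end CommRing

section Field

variable {R : Type*} [Field R] [CharZero R]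

theorem eval_mul_succ_div (n k : ℕ) (x : R) :
    (bernsteinPolynomial R n k).eval x * ((n + 1) * x / (k + 1)) =
      (bernsteinPolynomial R (n + 1) (k + 1)).eval x := by
  have hchoose : ((n + 1 : ℕ) : R) * n.choose k = (n + 1).choose (k + 1) * (k + 1 : ℕ) := by
    exact_mod_cast Nat.add_one_mul_choose_eq n k
  push_cast at hchoose
  rw [eval_eq, eval_eq, Nat.add_sub_add_right]
  field_simp
  linear_combination x ^ (k + 1) * (1 - x) ^ (n - k) * hchoose

theorem eval_mul_prod (n k m : ℕ) (x : R) :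
    (bernsteinPolynomial R n k).eval x * ∏ i ∈ range m, ((n + 1 + i) * x / (k + 1 + i)) =
      (bernsteinPolynomial R (n + m) (k + m)).eval x := by
  induction m with
  | zero => simp
  | succ m ih =>
    rw [prod_range_succ, ← mul_assoc, ih, ← add_assoc, ← add_assoc]
    convert eval_mul_succ_div (n + m) (k + m) x using 3 <;> push_cast <;> ring

end Field

theorem eval_nonneg {x : ℝ} (hx0 : 0 ≤ x) (hx1 : x ≤ 1) (n k : ℕ) :
    0 ≤ (bernsteinPolynomial ℝ n k).eval x := by
  have : 0 ≤ 1 - x := by linarith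
  rw [eval_eq]
  positivity

theorem sum_eval_mul_prod_le {x : ℝ} (hx0 : 0 ≤ x) (hx1 : x ≤ 1) (n m : ℕ) :
    ∑ k ∈ range (n + 1),
      (bernsteinPolynomial ℝ n k).eval x * ∏ i ∈ range m, ((n + 1 + i) * x / (k + 1 + i)) ≤ 1 :=
  calc _ = ∑ k ∈ range (n + 1), (bernsteinPolynomial ℝ (n + m) (k + m)).eval x := by
        simp only [eval_mul_prod]
    _ ≤ ∑ j ∈ range m, (bernsteinPolynomial ℝ (n + m) j).eval x +
          ∑ k ∈ range (n + 1), (bernsteinPolynomial ℝ (n + m) (m + k)).eval x := by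
        simp only [add_comm m]
        exact le_add_of_nonneg_left (sum_nonneg fun j _ => eval_nonneg hx0 hx1 _ _)
    _ = 1 := by rw [← sum_range_add, Nat.add_left_comm, ← add_assoc, sum_eval]

theorem sum_eval_mul_rpow_le {n m : ℕ} {x c γ : ℝ} (hx0 : 0 ≤ x) (hx1 : x ≤ 1) (hc : 0 ≤ c)
    (hγ : 0 ≤ γ) (hγm : γ ≤ m) {q : ℕ → ℝ} (hq0 : ∀ k, 0 ≤ q k)
    (hq : ∀ k ≤ n, q k ≤ c * (n * x / (k + 1))) :
    ∑ k ∈ range (n + 1), (bernsteinPolynomial ℝ n k).eval x * q k ^ γ ≤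
      1 + (c * (m + 1)) ^ m := by
  set P : ℕ → ℝ := fun k => ∏ i ∈ range m, ((n + 1 + i) * x / (k + 1 + i))
  have hpow : ∀ k ≤ n, q k ^ γ ≤ 1 + (c * (m + 1)) ^ m * P k := by
    intro k hk
    calc q k ^ γ ≤ 1 + q k ^ m := rpow_le_one_add_pow (hq0 k) hγ hγm
      _ ≤ 1 + ∏ i ∈ range m, (c * (m + 1) * ((n + 1 + i) * x / (k + 1 + i))) := by
          rw [← card_range m, ← prod_const, card_range]
          gcongr 1 + ?_
          refine prod_le_prod (fun _ _ => hq0 k) fun i hi => (hq k hk).trans ?_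
          rw [mul_assoc]
          exact mul_le_mul_of_nonneg_left (div_succ_le_mul_div hx0 (mem_range.1 hi)) hc
      _ = 1 + (c * (m + 1)) ^ m * P k := by rw [prod_mul_distrib, prod_const, card_range]
  calc _ ≤ ∑ k ∈ range (n + 1),
          (bernsteinPolynomial ℝ n k).eval x * (1 + (c * (m + 1)) ^ m * P k) := by
        refine sum_le_sum fun k hk => mul_le_mul_of_nonneg_left ?_ (eval_nonneg hx0 hx1 _ _)
        exact hpow k (Nat.lt_succ_iff.1 (mem_range.1 hk))
    _ = 1 + (c * (m + 1)) ^ m *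
          ∑ k ∈ range (n + 1), (bernsteinPolynomial ℝ n k).eval x * P k := by
        simp only [mul_add, mul_one, sum_add_distrib, sum_eval, mul_sum]
        congr 1
        exact sum_congr rfl fun k _ => by ring
    _ ≤ 1 + (c * (m + 1)) ^ m := by
        gcongr
        exact mul_le_of_le_one_right (by positivity) (sum_eval_mul_prod_le hx0 hx1 n m)

end bernsteinPolynomial

/-- The node `k*/n` of the paper, `k* = max 1 (min k (n - 1))`. -/
noncomputable def clampedNode (n k : ℕ) : ℝ := (max 1 (min k (n - 1)) : ℕ) / n

theorem clampedNode_nonneg (n k : ℕ) : 0 ≤ clampedNode n k := by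
  unfold clampedNode
  positivity

theorem clampedNode_le_one {n : ℕ} (hn : 1 ≤ n) (k : ℕ) : clampedNode n k ≤ 1 :=
  div_le_one_of_le₀ (by exact_mod_cast (by omega)) (by positivity)

theorem one_sub_clampedNode {n : ℕ} (hn : 1 ≤ n) (k : ℕ) :
    1 - clampedNode n k = (n - max 1 (min k (n - 1)) : ℕ) / n := by
  rw [clampedNode, Nat.cast_sub (by omega), sub_div, div_self (by positivity)]

theorem sum_eval_mul_div_clampedNode_rpow_le {n m : ℕ} {x γ : ℝ} (hx0 : 0 ≤ x) (hx1 : x ≤ 1)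
    (hγ : 0 ≤ γ) (hγm : γ ≤ m) :
    ∑ k ∈ range (n + 1), (bernsteinPolynomial ℝ n k).eval x * (x / clampedNode n k) ^ γ ≤
      1 + (3 * (m + 1)) ^ m :=
  bernsteinPolynomial.sum_eval_mul_rpow_le hx0 hx1 (by norm_num) hγ hγm
    (fun k => div_nonneg hx0 (clampedNode_nonneg n k))
    fun k _ => by exact_mod_cast div_div_le_mul_div (c := 3) hx0 (by omega)

theorem sum_eval_mul_one_sub_div_one_sub_clampedNode_rpow_le {n m : ℕ} {x γ : ℝ} (hn : 1 ≤ n)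
    (hx0 : 0 ≤ x) (hx1 : x ≤ 1) (hγ : 0 ≤ γ) (hγm : γ ≤ m) :
    ∑ k ∈ range (n + 1),
      (bernsteinPolynomial ℝ n k).eval x * ((1 - x) / (1 - clampedNode n k)) ^ γ ≤
        1 + (3 * (m + 1)) ^ m := by
  rw [bernsteinPolynomial.sum_eval_mul_reflect]
  refine bernsteinPolynomial.sum_eval_mul_rpow_le (by linarith) (by linarith) (by norm_num) hγ hγm
    (fun k => div_nonneg (by linarith) (by linarith [clampedNode_le_one hn (n - k)]))
    fun k _ => ?_
  rw [one_sub_clampedNode hn]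
  exact_mod_cast div_div_le_mul_div (c := 3) (by linarith) (by omega)

theorem cauchy_schwarz_weight_sum_bound (α β : ℝ) (hα : 0 < α) (hβ : 0 < β) :
    ∃ C > 0, ∀ n : ℕ, 1 ≤ n → ∀ x ∈ Set.Ioo (0:ℝ) 1,
      x^α*(1-x)^β * Real.sqrt (∑ k ∈ Finset.range (n+1),
        (let ks : ℕ := max 1 (min k (n-1));
          ((((ks:ℝ)/n)^α * (1-(ks:ℝ)/n)^β)⁻¹)^2 * (n.choose k : ℝ) * x^k * (1-x)^(n-k)))
      ≤ C := by
  obtain ⟨m₁, hm₁⟩ := exists_nat_ge (2 * α)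
  obtain ⟨m₂, hm₂⟩ := exists_nat_ge (2 * β)
  refine ⟨√((1 + (3 * (m₁ + 1)) ^ m₁) + (1 + (3 * (m₂ + 1)) ^ m₂)), by positivity,
    fun n hn x ⟨hx0, hx1⟩ => ?_⟩
  have hw : 0 ≤ x ^ α * (1 - x) ^ β := by have := sub_pos.2 hx1; positivity
  calc _ = √((x ^ α * (1 - x) ^ β) ^ 2 * ∑ k ∈ range (n + 1),
          ((clampedNode n k ^ α * (1 - clampedNode n k) ^ β)⁻¹) ^ 2 *
            (bernsteinPolynomial ℝ n k).eval x) := by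
        rw [sqrt_mul (sq_nonneg _), sqrt_sq hw]
        refine congrArg _ (congrArg _ (sum_congr rfl fun k _ => ?_))
        rw [bernsteinPolynomial.eval_eq, clampedNode]
        ring
    _ ≤ √(∑ k ∈ range (n + 1), ((x / clampedNode n k) ^ (2 * α) +
          ((1 - x) / (1 - clampedNode n k)) ^ (2 * β)) * (bernsteinPolynomial ℝ n k).eval x) := by
        refine sqrt_le_sqrt ?_
        rw [mul_sum]
        refine sum_le_sum fun k _ => ?_
        rw [← mul_assoc]
        exact mul_le_mul_of_nonneg_right (weight_sq_mul_inv_sq_le hx0.le hx1.le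
          (clampedNode_nonneg n k) (clampedNode_le_one hn k) hα.le hβ.le)
          (bernsteinPolynomial.eval_nonneg hx0.le hx1.le n k)
    _ ≤ _ := by
        refine sqrt_le_sqrt (le_of_eq_of_le ?_ (add_le_add
          (sum_eval_mul_div_clampedNode_rpow_le (n := n) hx0.le hx1.le (by positivity) hm₁)
          (sum_eval_mul_one_sub_div_one_sub_clampedNode_rpow_le hn hx0.le hx1.le (by positivity)
            hm₂)))
        rw [← sum_add_distrib]
        exact sum_congr rfl fun k _ => by ring
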